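/- There exist constants C₁ > 0 and γ₀ ∈ (0,1/3) such that for all 0 < γ < γ₀ and all ω ∈ [−N−1/2, N+1/2]², one has 1 − K̂_γ(ω) ≥ min(|γω|², 1)/C₁, where |·| denotes the Euclidean norm. -/

import Mathlib

open MeasureTheory

/-- The Euclidean norm on `ℝ²` (represented as `ℝ × ℝ`). -/
noncomputable def enorm2 (x : ℝ × ℝ) : ℝ := Real.sqrt (x.1 ^ 2 + x.2 ^ 2)

/-- The microscopic system size `N = ⌊γ⁻²⌋`. -/
noncomputable def NN (γ : ℝ) : ℕ := ⌊γ⁻¹ ^ 2⌋₊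

/-- The punctured lattice box `{-N, …, N}² \ {0}`. -/
noncomputable def latt (γ : ℝ) : Finset (ℤ × ℤ) :=
  ((Finset.Icc (-(NN γ : ℤ)) ((NN γ : ℤ))) ×ˢ (Finset.Icc (-(NN γ : ℤ)) ((NN γ : ℤ)))).erase
    (0, 0)

/-- The full lattice box `{-N, …, N}²`. -/
noncomputable def fullbox (γ : ℝ) : Finset (ℤ × ℤ) :=
  (Finset.Icc (-(NN γ : ℤ)) ((NN γ : ℤ))) ×ˢ (Finset.Icc (-(NN γ : ℤ)) ((NN γ : ℤ)))

/-- The macroscopic lattice spacing `ε = 2 / (2N + 1)`. -/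
noncomputable def epsg (γ : ℝ) : ℝ := 2 / (2 * (NN γ : ℝ) + 1)

/-- The normalising constant `c_γ`, with `c_γ⁻¹ = ∑_{k ∈ {-N,…,N}², k ≠ 0} γ² 𝔎(γ k)`. -/
noncomputable def cgam (K : ℝ × ℝ → ℝ) (γ : ℝ) : ℝ :=
  (∑ k ∈ latt γ, γ ^ 2 * K (γ * (k.1 : ℝ), γ * (k.2 : ℝ)))⁻¹

/-- The discrete Fourier transform `K̂_γ` of the rescaled interaction kernel:
`K̂_γ(ω) = c_γ ∑_{k ∈ {-N,…,N}², k ≠ 0} γ² 𝔎(γ k) cos (π ε ω · k)`. -/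
noncomputable def Khat (K : ℝ × ℝ → ℝ) (γ : ℝ) (ω : ℝ × ℝ) : ℝ :=
  cgam K γ * ∑ k ∈ latt γ, γ ^ 2 * K (γ * (k.1 : ℝ), γ * (k.2 : ℝ)) *
    Real.cos (Real.pi * epsg γ * (ω.1 * (k.1 : ℝ) + ω.2 * (k.2 : ℝ)))

/-- The standing assumptions on the interaction kernel `𝔎 : ℝ² → [0, 1]`:
twice continuously differentiable, rotation invariant, compact support in `B(0,3)`,
`∫ 𝔎 = 1` and `∫ 𝔎(x) |x|² dx = 4`. -/
def IsKernel (K : ℝ × ℝ → ℝ) : Prop :=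
  ContDiff ℝ 2 K ∧
  (∀ x, K x ∈ Set.Icc (0 : ℝ) 1) ∧
  (∀ x y : ℝ × ℝ, enorm2 x = enorm2 y → K x = K y) ∧
  (∀ x : ℝ × ℝ, 3 ≤ enorm2 x → K x = 0) ∧
  (∫ x : ℝ × ℝ, K x) = 1 ∧
  (∫ x : ℝ × ℝ, K x * enorm2 x ^ 2) = 4

/-- The unit vector in direction `j` in `ℝ²`. -/
noncomputable def dirv (j : Fin 2) : ℝ × ℝ := if j = 0 then (1, 0) else (0, 1)

/-- The `j`-th coordinate of a point of `ℝ²`. -/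
noncomputable def coordj (j : Fin 2) (ω : ℝ × ℝ) : ℝ := if j = 0 then ω.1 else ω.2

/-- The partial derivative `∂_j f` of a function on `ℝ²`. -/
noncomputable def pd (f : ℝ × ℝ → ℝ) (j : Fin 2) (ω : ℝ × ℝ) : ℝ := fderiv ℝ f ω (dirv j)

/-- The second partial derivative `∂_j² f` of a function on `ℝ²`. -/
noncomputable def pd2 (f : ℝ × ℝ → ℝ) (j : Fin 2) (ω : ℝ × ℝ) : ℝ := pd (pd f j) j ω

/-!
With `S = ∑ₖ γ² 𝔎(γk)` and `Φ(ω) = ∑ₖ γ² 𝔎(γk) (1 - cos (π ε ω·k))` we have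
`1 - K̂_γ(ω) = Φ(ω) / S`. Since `𝔎` is Lipschitz, comparing `S` with the Riemann sum of
`∫ 𝔎 = 1` gives `3/4 ≤ S ≤ 49`, so sites with `𝔎(γk) ≥ 1/400` carry a fixed share of the
mass. By `1 - cos (b - a) ≤ 2 (1 - cos a) + 2 (1 - cos b)`, pairing each such site `k` with
`k + h`, where `|h| ≲ 1/(Lγ)` keeps `𝔎(γ(k + h)) ≥ 1/800`, yields `Φ(ω) ≳ 1 - cos (π ε ω·h)`.
Take `h = n eⱼ` along the larger coordinate of `ω`: either some admissible `n` puts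
`n π ε |ωⱼ|` in `[π/2, 3π/2]`, or the largest one keeps it below `π/2`, where
`1 - cos t ≥ 2t²/π²`; as `ε ≥ γ²/2`, in both cases `Φ(ω) ≳ min(1, |γω|²)`.
-/

open Real Finset
open scoped NNReal

lemma hasCompactSupport_of_eq_zero_of_le_norm {E β : Type*} [NormedAddCommGroup E]
    [ProperSpace E] [Zero β] {f : E → β} (R : ℝ) (hf : ∀ x, R ≤ ‖x‖ → f x = 0) :
    HasCompactSupport f :=
  HasCompactSupport.intro (isCompact_closedBall 0 R) fun x hx =>
    hf x (by simpa using (lt_of_not_ge (Metric.mem_closedBall.not.1 hx)).le)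

lemma norm_le_enorm2 (x : ℝ × ℝ) : ‖x‖ ≤ enorm2 x := by
  rw [Prod.norm_def, enorm2, Real.norm_eq_abs, Real.norm_eq_abs]
  exact max_le (Real.abs_le_sqrt (by nlinarith [sq_nonneg x.2]))
    (Real.abs_le_sqrt (by nlinarith [sq_nonneg x.1]))

section Lattice

noncomputable def intBox (m : ℕ) : Finset (ℤ × ℤ) := Icc (-(m : ℤ)) m ×ˢ Icc (-(m : ℤ)) m

lemma mem_intBox {m : ℕ} {k : ℤ × ℤ} : k ∈ intBox m ↔ |k.1| ≤ m ∧ |k.2| ≤ m := by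
  simp [intBox, abs_le]

lemma card_intBox (m : ℕ) : #(intBox m) = (2 * m + 1) ^ 2 := by
  rw [intBox, card_product, Int.card_Icc, sq]
  congr 2 <;> omega

lemma intBox_mono {m n : ℕ} (h : m ≤ n) : intBox m ⊆ intBox n := fun k hk => by
  rw [mem_intBox] at hk ⊢
  exact ⟨hk.1.trans (by exact_mod_cast h), hk.2.trans (by exact_mod_cast h)⟩

lemma mem_intBox_ceil {r : ℝ} {k : ℤ × ℤ} (h1 : |(k.1 : ℝ)| ≤ r) (h2 : |(k.2 : ℝ)| ≤ r) :
    k ∈ intBox ⌈r⌉₊ := by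
  rw [← Int.cast_abs] at h1 h2
  rw [mem_intBox]
  constructor
  · exact_mod_cast h1.trans (Nat.le_ceil r)
  · exact_mod_cast h2.trans (Nat.le_ceil r)

lemma card_intBox_ceil_mul_sq_le {γ c : ℝ} (hγ : 0 < γ) (hc : 0 ≤ c) :
    (#(intBox ⌈c / γ⌉₊) : ℝ) * γ ^ 2 ≤ (2 * c + 3 * γ) ^ 2 := by
  have hceil : (⌈c / γ⌉₊ : ℝ) * γ ≤ c + γ := by
    have := (Nat.ceil_lt_add_one (div_nonneg hc hγ.le)).le
    calc (⌈c / γ⌉₊ : ℝ) * γ ≤ (c / γ + 1) * γ := by gcongr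
      _ = c + γ := by field_simp
  rw [card_intBox]
  push_cast
  rw [← mul_pow]
  gcongr
  linarith

lemma latt_eq_erase (γ : ℝ) : latt γ = (fullbox γ).erase 0 := rfl

lemma mem_latt_of_abs_le {γ r : ℝ} {k : ℤ × ℤ} (hk : k ≠ 0) (h1 : |(k.1 : ℝ)| ≤ r)
    (h2 : |(k.2 : ℝ)| ≤ r) (hr : r ≤ NN γ) : k ∈ latt γ :=
  mem_erase.2 ⟨hk, intBox_mono (Nat.ceil_le.2 hr) (mem_intBox_ceil h1 h2)⟩

end Lattice

section Scales

variable {γ : ℝ}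

lemma epsg_mul_NN_add_half (γ : ℝ) : epsg γ * ((NN γ : ℝ) + 1 / 2) = 1 := by
  rw [epsg]
  field_simp

lemma sq_div_two_le_epsg (hγ : 0 < γ) (hγ1 : γ ≤ 1) : γ ^ 2 / 2 ≤ epsg γ := by
  have hN : (NN γ : ℝ) ≤ γ⁻¹ ^ 2 := Nat.floor_le (by positivity)
  have hinv : γ ^ 2 * γ⁻¹ ^ 2 = 1 := by field_simp
  rw [epsg, le_div_iff₀ (by positivity)]
  nlinarith [sq_nonneg γ]

lemma four_div_le_NN (hγ : 0 < γ) (hγ5 : γ ≤ 1 / 5) : 4 / γ ≤ NN γ := by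
  have hN : γ⁻¹ ^ 2 < (NN γ : ℝ) + 1 := Nat.lt_floor_add_one _
  have h5 : 5 ≤ γ⁻¹ := by
    rw [le_inv_comm₀ (by norm_num) hγ]
    linarith
  rw [div_eq_mul_inv]
  nlinarith

end Scales

section Weights

variable {K : ℝ × ℝ → ℝ} {γ : ℝ}

noncomputable def weight (K : ℝ × ℝ → ℝ) (γ : ℝ) (k : ℤ × ℤ) : ℝ :=
  γ ^ 2 * K (γ * (k.1 : ℝ), γ * (k.2 : ℝ))

noncomputable def phase (γ : ℝ) (ω : ℝ × ℝ) (k : ℤ × ℤ) : ℝ :=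
  π * epsg γ * (ω.1 * (k.1 : ℝ) + ω.2 * (k.2 : ℝ))

noncomputable def totalWeight (K : ℝ × ℝ → ℝ) (γ : ℝ) : ℝ := ∑ k ∈ latt γ, weight K γ k

noncomputable def dissipation (K : ℝ × ℝ → ℝ) (γ : ℝ) (ω : ℝ × ℝ) : ℝ :=
  ∑ k ∈ latt γ, weight K γ k * (1 - cos (phase γ ω k))

lemma one_sub_Khat_eq (h : totalWeight K γ ≠ 0) (ω : ℝ × ℝ) :
    1 - Khat K γ ω = dissipation K γ ω / totalWeight K γ := by
  have hsum : ∑ k ∈ latt γ, γ ^ 2 * K (γ * (k.1 : ℝ), γ * (k.2 : ℝ)) *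
      cos (π * epsg γ * (ω.1 * (k.1 : ℝ) + ω.2 * (k.2 : ℝ))) =
      totalWeight K γ - dissipation K γ ω := by
    rw [totalWeight, dissipation, ← sum_sub_distrib]
    exact sum_congr rfl fun k _ => by rw [weight, phase]; ring
  rw [Khat, hsum, show cgam K γ = (totalWeight K γ)⁻¹ from rfl]
  field_simp
  ring

lemma phase_add (ω : ℝ × ℝ) (k h : ℤ × ℤ) : phase γ ω (k + h) = phase γ ω k + phase γ ω h := by
  simp only [phase, Prod.fst_add, Prod.snd_add, Int.cast_add]
  ring

lemma phase_nsmul (ω : ℝ × ℝ) (n : ℕ) (d : ℤ × ℤ) : phase γ ω (n • d) = n * phase γ ω d := by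
  rw [phase, phase, Prod.smul_fst, Prod.smul_snd, nsmul_eq_mul, nsmul_eq_mul]
  push_cast
  ring

lemma dissipation_nonneg (hK0 : ∀ x, 0 ≤ K x) (ω : ℝ × ℝ) : 0 ≤ dissipation K γ ω :=
  sum_nonneg fun _ _ => mul_nonneg (mul_nonneg (sq_nonneg γ) (hK0 _))
    (sub_nonneg.2 (cos_le_one _))

lemma abs_lt_three_of_kernel_ne_zero (hsupp : ∀ x : ℝ × ℝ, 3 ≤ ‖x‖ → K x = 0) {x : ℝ × ℝ}
    (hx : K x ≠ 0) : |x.1| < 3 ∧ |x.2| < 3 := by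
  simpa [Prod.norm_def] using lt_of_not_ge (mt (hsupp x) hx)

lemma abs_le_div_of_kernel_ne_zero (hsupp : ∀ x : ℝ × ℝ, 3 ≤ ‖x‖ → K x = 0) (hγ : 0 < γ)
    {k : ℤ × ℤ} (hk : K (γ * (k.1 : ℝ), γ * (k.2 : ℝ)) ≠ 0) :
    |(k.1 : ℝ)| ≤ 3 / γ ∧ |(k.2 : ℝ)| ≤ 3 / γ := by
  obtain ⟨h1, h2⟩ := abs_lt_three_of_kernel_ne_zero hsupp hk
  rw [abs_mul, abs_of_pos hγ] at h1 h2
  constructor <;> rw [le_div_iff₀ hγ] <;> linarith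

lemma sum_weight_le (hsupp : ∀ x : ℝ × ℝ, 3 ≤ ‖x‖ → K x = 0) (hγ : 0 < γ) {a : ℝ} (ha : 0 ≤ a)
    (F : Finset (ℤ × ℤ)) (hF : ∀ k ∈ F, K (γ * (k.1 : ℝ), γ * (k.2 : ℝ)) ≤ a) :
    ∑ k ∈ F, weight K γ k ≤ a * (6 + 3 * γ) ^ 2 := by
  classical
  set B := intBox ⌈3 / γ⌉₊
  have hB : #(F.filter (· ∈ B)) ≤ #B := card_le_card fun k hk => (mem_filter.1 hk).2
  calc ∑ k ∈ F, weight K γ k = ∑ k ∈ F with k ∈ B, weight K γ k := by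
        refine (sum_filter_of_ne fun k _ hk => ?_).symm
        have := abs_le_div_of_kernel_ne_zero hsupp hγ (right_ne_zero_of_mul hk)
        exact mem_intBox_ceil this.1 this.2
    _ ≤ ∑ k ∈ F with k ∈ B, a * γ ^ 2 := sum_le_sum fun k hk => by
        rw [weight, mul_comm (γ ^ 2)]
        exact mul_le_mul_of_nonneg_right (hF k (mem_filter.1 hk).1) (sq_nonneg γ)
    _ = #(F.filter (· ∈ B)) * γ ^ 2 * a := by rw [sum_const, nsmul_eq_mul]; ring
    _ ≤ #B * γ ^ 2 * a := by gcongr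
    _ ≤ (2 * 3 + 3 * γ) ^ 2 * a := by
        gcongr
        exact card_intBox_ceil_mul_sq_le hγ (by norm_num)
    _ = a * (6 + 3 * γ) ^ 2 := by ring

lemma totalWeight_le (hK1 : ∀ x, K x ≤ 1) (hsupp : ∀ x : ℝ × ℝ, 3 ≤ ‖x‖ → K x = 0)
    (hγ : 0 < γ) (hγ3 : γ ≤ 1 / 3) : totalWeight K γ ≤ 49 := by
  have := sum_weight_le hsupp hγ zero_le_one (latt γ) fun k _ => hK1 _
  rw [totalWeight]
  nlinarith

open Classical in
noncomputable def heavy (K : ℝ × ℝ → ℝ) (γ : ℝ) : Finset (ℤ × ℤ) :=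
  {k ∈ latt γ | 1 / 400 ≤ K (γ * (k.1 : ℝ), γ * (k.2 : ℝ))}

lemma mem_heavy {k : ℤ × ℤ} :
    k ∈ heavy K γ ↔ k ∈ latt γ ∧ 1 / 400 ≤ K (γ * (k.1 : ℝ), γ * (k.2 : ℝ)) :=
  mem_filter

lemma card_heavy_mul_sq_ge (hK1 : ∀ x, K x ≤ 1) (hsupp : ∀ x : ℝ × ℝ, 3 ≤ ‖x‖ → K x = 0)
    (hγ : 0 < γ) (hγ3 : γ ≤ 1 / 3) (hS : 3 / 4 ≤ totalWeight K γ) :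
    1 / 2 ≤ (#(heavy K γ) : ℝ) * γ ^ 2 := by
  classical
  have hsplit := sum_filter_add_sum_filter_not (latt γ)
    (fun k => 1 / 400 ≤ K (γ * (k.1 : ℝ), γ * (k.2 : ℝ))) (weight K γ)
  have hheavy : ∑ k ∈ heavy K γ, weight K γ k ≤ #(heavy K γ) * γ ^ 2 := by
    refine (sum_le_card_nsmul _ _ _ fun k _ => ?_).trans (nsmul_eq_mul _ _).le
    exact mul_le_of_le_one_right (sq_nonneg γ) (hK1 _)
  have hlight := sum_weight_le hsupp hγ (by norm_num : (0 : ℝ) ≤ 1 / 400)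
    ((latt γ).filter fun k => ¬ 1 / 400 ≤ K (γ * (k.1 : ℝ), γ * (k.2 : ℝ)))
    fun k hk => (not_le.1 (mem_filter.1 hk).2).le
  rw [← totalWeight] at hsplit
  change ∑ k ∈ heavy K γ, weight K γ k + _ = _ at hsplit
  nlinarith

end Weights

section RiemannSum

variable {K : ℝ × ℝ → ℝ} {γ : ℝ} {L : ℝ≥0}

noncomputable def nearestIndex (γ : ℝ) (x : ℝ × ℝ) : ℤ × ℤ := (round (x.1 / γ), round (x.2 / γ))

/-- The square of side `γ` centred at `γ k`, up to its boundary; defining it by rounding makes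
the cells a partition of the plane by construction. -/
def cell (γ : ℝ) (k : ℤ × ℤ) : Set (ℝ × ℝ) := nearestIndex γ ⁻¹' {k}

lemma measurableSet_cell (γ : ℝ) (k : ℤ × ℤ) : MeasurableSet (cell γ k) := by
  have : Measurable (nearestIndex γ) := by
    unfold nearestIndex
    simp_rw [round_eq]
    exact (Int.measurable_floor.comp (by fun_prop)).prodMk (Int.measurable_floor.comp (by fun_prop))
  exact this (measurableSet_singleton k)

lemma abs_sub_mul_round_div_le (hγ : 0 < γ) (t : ℝ) : |t - γ * round (t / γ)| ≤ γ / 2 := by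
  calc |t - γ * round (t / γ)| = γ * |t / γ - round (t / γ)| := by
        rw [← abs_of_pos hγ, ← abs_mul, abs_of_pos hγ, mul_sub, mul_div_cancel₀ _ hγ.ne']
    _ ≤ γ * (1 / 2) := by gcongr; exact abs_sub_round _
    _ = γ / 2 := by ring

lemma cell_subset_closedBall (hγ : 0 < γ) (k : ℤ × ℤ) :
    cell γ k ⊆ Metric.closedBall (γ * (k.1 : ℝ), γ * (k.2 : ℝ)) (γ / 2) := by
  intro x hx
  obtain ⟨h1, h2⟩ := Prod.ext_iff.1 (show nearestIndex γ x = k from hx)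
  rw [Metric.mem_closedBall, Prod.dist_eq, Real.dist_eq, Real.dist_eq, ← h1, ← h2]
  exact max_le (abs_sub_mul_round_div_le hγ _) (abs_sub_mul_round_div_le hγ _)

lemma measureReal_cell_le (hγ : 0 < γ) (k : ℤ × ℤ) : volume.real (cell γ k) ≤ γ ^ 2 := by
  have hball : ∀ p : ℝ × ℝ, volume (Metric.closedBall p (γ / 2)) =
      ENNReal.ofReal γ * ENNReal.ofReal γ := fun p => by
    rw [← closedBall_prod_same, Measure.volume_eq_prod, Measure.prod_prod,
      Real.volume_closedBall, Real.volume_closedBall]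
    ring_nf
  calc volume.real (cell γ k) ≤ volume.real (Metric.closedBall _ (γ / 2)) :=
        measureReal_mono (cell_subset_closedBall hγ k) (by rw [hball]; finiteness)
    _ = γ ^ 2 := by
        rw [measureReal_def, hball, ENNReal.toReal_mul, ENNReal.toReal_ofReal hγ.le, sq]

lemma setIntegral_cell_le (hK0 : ∀ x, 0 ≤ K x) (hLip : LipschitzWith L K) (hKi : Integrable K)
    (hγ : 0 < γ) (k : ℤ × ℤ) :
    ∫ x in cell γ k, K x ≤ weight K γ k + L * γ ^ 3 / 2 := by
  set p : ℝ × ℝ := (γ * (k.1 : ℝ), γ * (k.2 : ℝ))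
  have hfin : volume (cell γ k) ≠ ⊤ :=
    measure_ne_top_of_subset (cell_subset_closedBall hγ k) measure_closedBall_lt_top.ne
  have hpt : ∀ x ∈ cell γ k, K x ≤ K p + L * (γ / 2) := fun x hx => by
    have hdist := hLip.dist_le_mul x p
    rw [Real.dist_eq] at hdist
    have hx := Metric.mem_closedBall.1 (cell_subset_closedBall hγ k hx)
    nlinarith [le_abs_self (K x - K p), L.coe_nonneg]
  calc ∫ x in cell γ k, K x ≤ ∫ _ in cell γ k, (K p + L * (γ / 2)) :=
        setIntegral_mono_on hKi.integrableOn (integrableOn_const hfin)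
          (measurableSet_cell γ k) hpt
    _ = volume.real (cell γ k) * (K p + L * (γ / 2)) := by rw [setIntegral_const, smul_eq_mul]
    _ ≤ γ ^ 2 * (K p + L * (γ / 2)) := by
        gcongr
        · exact add_nonneg (hK0 p) (by positivity)
        · exact measureReal_cell_le hγ k
    _ = weight K γ k + L * γ ^ 3 / 2 := by rw [weight]; ring

lemma nearestIndex_mem_intBox (hsupp : ∀ x : ℝ × ℝ, 3 ≤ ‖x‖ → K x = 0) (hγ : 0 < γ)
    (hγ2 : γ ≤ 2) {x : ℝ × ℝ} (hx : K x ≠ 0) : nearestIndex γ x ∈ intBox ⌈4 / γ⌉₊ := by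
  have hround : ∀ t : ℝ, |t| < 3 → |((round (t / γ) : ℤ) : ℝ)| ≤ 4 / γ := fun t ht => by
    have h1 := abs_sub_abs_le_abs_sub ((round (t / γ) : ℤ) : ℝ) (t / γ)
    rw [abs_sub_comm] at h1
    have h2 := abs_sub_round (t / γ)
    have h3 : |t / γ| ≤ 3 / γ := by rw [abs_div, abs_of_pos hγ]; gcongr
    have h4 : 1 / 2 ≤ 1 / γ := by gcongr
    linarith [show 4 / γ = 3 / γ + 1 / γ by ring]
  obtain ⟨h1, h2⟩ := abs_lt_three_of_kernel_ne_zero hsupp hx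
  exact mem_intBox_ceil (hround _ h1) (hround _ h2)

lemma integral_eq_sum_setIntegral_cell (hsupp : ∀ x : ℝ × ℝ, 3 ≤ ‖x‖ → K x = 0)
    (hKi : Integrable K) (hγ : 0 < γ) (hγ2 : γ ≤ 2) :
    ∫ x, K x = ∑ k ∈ intBox ⌈4 / γ⌉₊, ∫ x in cell γ k, K x := by
  rw [← integral_biUnion_finset _ (fun k _ => measurableSet_cell γ k)
    (fun a _ b _ hab => Disjoint.preimage _ (Set.disjoint_singleton.2 hab))
    (fun _ _ => hKi.integrableOn)]
  refine (setIntegral_eq_integral_of_forall_compl_eq_zero fun x hx => ?_).symm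
  by_contra hne
  exact hx (Set.mem_biUnion (nearestIndex_mem_intBox hsupp hγ hγ2 hne) rfl)

lemma totalWeight_ge (hK : ∀ x, K x ∈ Set.Icc (0 : ℝ) 1)
    (hsupp : ∀ x : ℝ × ℝ, 3 ≤ ‖x‖ → K x = 0) (hLip : LipschitzWith L K)
    (hint : ∫ x, K x = 1) (hγ : 0 < γ) (hγ3 : γ ≤ 1 / 3) (hN : 4 / γ ≤ NN γ) :
    1 - γ ^ 2 - 41 * L * γ ≤ totalWeight K γ := by
  have hKi : Integrable K := hLip.continuous.integrable_of_hasCompactSupport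
    (hasCompactSupport_of_eq_zero_of_le_norm 3 hsupp)
  have hw : ∀ k, 0 ≤ weight K γ k := fun k => mul_nonneg (sq_nonneg γ) (hK _).1
  set B := intBox ⌈4 / γ⌉₊
  have hcard : (#B : ℝ) * γ ^ 2 ≤ 81 := by
    have := card_intBox_ceil_mul_sq_le hγ (by norm_num : (0 : ℝ) ≤ 4)
    nlinarith
  have hfull : ∑ k ∈ fullbox γ, weight K γ k ≤ γ ^ 2 + totalWeight K γ := by
    rw [← add_sum_erase (fullbox γ) _ (mem_intBox.2 (by simp) : (0 : ℤ × ℤ) ∈ fullbox γ),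
      totalWeight, latt_eq_erase]
    gcongr
    exact mul_le_of_le_one_right (sq_nonneg γ) (hK _).2
  have key : 1 ≤ γ ^ 2 + totalWeight K γ + 41 * L * γ := calc
    1 = ∑ k ∈ B, ∫ x in cell γ k, K x := by
        rw [← hint, integral_eq_sum_setIntegral_cell hsupp hKi hγ (by linarith)]
    _ ≤ ∑ k ∈ B, (weight K γ k + L * γ ^ 3 / 2) :=
        sum_le_sum fun k _ => setIntegral_cell_le (fun x => (hK x).1) hLip hKi hγ k
    _ = ∑ k ∈ B, weight K γ k + #B * γ ^ 2 * (L * γ / 2) := by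
        rw [sum_add_distrib, sum_const, nsmul_eq_mul]; ring
    _ ≤ ∑ k ∈ fullbox γ, weight K γ k + 81 * (L * γ / 2) :=
        add_le_add (sum_le_sum_of_subset_of_nonneg (intBox_mono (Nat.ceil_le.2 hN))
          fun k _ _ => hw k) (mul_le_mul_of_nonneg_right hcard (by positivity))
    _ ≤ γ ^ 2 + totalWeight K γ + 41 * L * γ := by
        nlinarith [L.coe_nonneg]
  linarith

lemma three_quarters_le_totalWeight (hK : ∀ x, K x ∈ Set.Icc (0 : ℝ) 1)
    (hsupp : ∀ x : ℝ × ℝ, 3 ≤ ‖x‖ → K x = 0) (hLip : LipschitzWith L K) (hL : 1 ≤ L)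
    (hint : ∫ x, K x = 1) (hγ : 0 < γ) (hγL : 1600 * L * γ ≤ 1) :
    3 / 4 ≤ totalWeight K γ := by
  have hL' : (1 : ℝ) ≤ L := by exact_mod_cast hL
  have hγ5 : γ ≤ 1 / 5 := by nlinarith
  have := totalWeight_ge hK hsupp hLip hint hγ (by linarith) (four_div_le_NN hγ hγ5)
  nlinarith

end RiemannSum

section Pairing

variable {K : ℝ × ℝ → ℝ} {γ : ℝ} {L : ℝ≥0}

lemma one_sub_cos_sub_le (a b : ℝ) :
    1 - cos (b - a) ≤ 2 * (1 - cos a) + 2 * (1 - cos b) := by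
  rw [cos_sub]
  nlinarith [sin_sq_add_cos_sq a, sin_sq_add_cos_sq b, sq_nonneg (sin a - sin b),
    sq_nonneg (sin a + sin b), sq_nonneg (cos a + cos b - 2)]

lemma card_mul_le_dissipation (hK0 : ∀ x, 0 ≤ K x) {P : Finset (ℤ × ℤ)} {h : ℤ × ℤ} {a : ℝ}
    (ha : 0 ≤ a) (hP : P ⊆ latt γ) (hPh : ∀ k ∈ P, k + h ∈ latt γ)
    (hw : ∀ k ∈ P, a ≤ weight K γ k ∧ a ≤ weight K γ (k + h)) (ω : ℝ × ℝ) :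
    #P * a * (1 - cos (phase γ ω h)) ≤ 4 * dissipation K γ ω := by
  set g : ℤ × ℤ → ℝ := fun k => weight K γ k * (1 - cos (phase γ ω k))
  have hc : ∀ k, 0 ≤ 1 - cos (phase γ ω k) := fun k => sub_nonneg.2 (cos_le_one _)
  have hg : ∀ k, 0 ≤ g k := fun k => mul_nonneg (mul_nonneg (sq_nonneg γ) (hK0 _)) (hc k)
  have hpair : ∀ k ∈ P, a * (1 - cos (phase γ ω h)) ≤ 2 * g k + 2 * g (k + h) := by
    intro k hk
    have hcos := one_sub_cos_sub_le (phase γ ω k) (phase γ ω (k + h))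
    rw [show phase γ ω (k + h) - phase γ ω k = phase γ ω h by rw [phase_add]; ring] at hcos
    obtain ⟨h1, h2⟩ := hw k hk
    calc a * (1 - cos (phase γ ω h))
        ≤ a * (2 * (1 - cos (phase γ ω k)) + 2 * (1 - cos (phase γ ω (k + h)))) := by gcongr
      _ = 2 * (a * (1 - cos (phase γ ω k))) + 2 * (a * (1 - cos (phase γ ω (k + h)))) := by ring
      _ ≤ 2 * g k + 2 * g (k + h) := by
          have := mul_le_mul_of_nonneg_right h1 (hc k)
          have := mul_le_mul_of_nonneg_right h2 (hc (k + h))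
          simp only [g]
          linarith
  have hsum : ∑ k ∈ P, g k ≤ dissipation K γ ω :=
    sum_le_sum_of_subset_of_nonneg hP fun k _ _ => hg k
  have hsum' : ∑ k ∈ P, g (k + h) ≤ dissipation K γ ω := by
    have hmap := sum_map P (addRightEmbedding h) g
    simp only [addRightEmbedding_apply] at hmap
    rw [← hmap]
    refine sum_le_sum_of_subset_of_nonneg (fun k hk => ?_) fun k _ _ => hg k
    obtain ⟨j, hj, rfl⟩ := mem_map.1 hk
    exact hPh j hj
  calc #P * a * (1 - cos (phase γ ω h)) = ∑ _k ∈ P, a * (1 - cos (phase γ ω h)) := by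
        rw [sum_const, nsmul_eq_mul]; ring
    _ ≤ ∑ k ∈ P, (2 * g k + 2 * g (k + h)) := sum_le_sum hpair
    _ = 2 * ∑ k ∈ P, g k + 2 * ∑ k ∈ P, g (k + h) := by
        rw [sum_add_distrib, mul_sum, mul_sum]
    _ ≤ 4 * dissipation K γ ω := by linarith

lemma add_mem_latt_of_mem_heavy (hsupp : ∀ x : ℝ × ℝ, 3 ≤ ‖x‖ → K x = 0) (hγ : 0 < γ)
    (hN : 4 / γ ≤ NN γ) {k h : ℤ × ℤ} (hk : k ∈ heavy K γ) (hkh : k + h ≠ 0)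
    (h1 : |(h.1 : ℝ)| ≤ 1 / γ) (h2 : |(h.2 : ℝ)| ≤ 1 / γ) : k + h ∈ latt γ := by
  have hK : K (γ * (k.1 : ℝ), γ * (k.2 : ℝ)) ≠ 0 :=
    (lt_of_lt_of_le (by norm_num) (mem_heavy.1 hk).2).ne'
  obtain ⟨hk1, hk2⟩ := abs_le_div_of_kernel_ne_zero hsupp hγ hK
  have hsplit : 4 / γ = 3 / γ + 1 / γ := by ring
  refine mem_latt_of_abs_le hkh ?_ ?_ hN
  · rw [Prod.fst_add, Int.cast_add]
    exact (abs_add_le _ _).trans (by linarith)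
  · rw [Prod.snd_add, Int.cast_add]
    exact (abs_add_le _ _).trans (by linarith)

lemma le_kernel_add_of_mem_heavy (hLip : LipschitzWith L K) (hγ : 0 < γ) {k h : ℤ × ℤ}
    (hk : k ∈ heavy K γ) (h1 : 800 * L * γ * |(h.1 : ℝ)| ≤ 1)
    (h2 : 800 * L * γ * |(h.2 : ℝ)| ≤ 1) :
    1 / 800 ≤ K (γ * ((k + h).1 : ℝ), γ * ((k + h).2 : ℝ)) := by
  have hdist := hLip.dist_le_mul (γ * ((k + h).1 : ℝ), γ * ((k + h).2 : ℝ))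
    (γ * (k.1 : ℝ), γ * (k.2 : ℝ))
  have e1 : γ * ((k + h).1 : ℝ) - γ * k.1 = γ * h.1 := by rw [Prod.fst_add, Int.cast_add]; ring
  have e2 : γ * ((k + h).2 : ℝ) - γ * k.2 = γ * h.2 := by rw [Prod.snd_add, Int.cast_add]; ring
  rw [Real.dist_eq, Prod.dist_eq, Real.dist_eq, Real.dist_eq, e1, e2, abs_mul, abs_mul,
    abs_of_pos hγ, mul_max_of_nonneg _ _ L.coe_nonneg] at hdist
  have hmax : max (L * (γ * |(h.1 : ℝ)|)) (L * (γ * |(h.2 : ℝ)|)) ≤ 1 / 800 :=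
    max_le (by linarith) (by linarith)
  linarith [neg_abs_le (K (γ * ((k + h).1 : ℝ), γ * ((k + h).2 : ℝ)) - K (γ * k.1, γ * k.2)),
    (mem_heavy.1 hk).2]

lemma dissipation_ge_of_shift (hK0 : ∀ x, 0 ≤ K x)
    (hsupp : ∀ x : ℝ × ℝ, 3 ≤ ‖x‖ → K x = 0) (hLip : LipschitzWith L K) (hL : 1 ≤ L)
    (hγ : 0 < γ) (hγ2 : γ ≤ 1 / 2) (hN : 4 / γ ≤ NN γ)
    (hheavy : 1 / 2 ≤ (#(heavy K γ) : ℝ) * γ ^ 2) {h : ℤ × ℤ} {m : ℝ}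
    (h1 : |(h.1 : ℝ)| ≤ m) (h2 : |(h.2 : ℝ)| ≤ m) (hm : 800 * L * γ * m ≤ 1) (ω : ℝ × ℝ) :
    (1 - cos (phase γ ω h)) / 12800 ≤ dissipation K γ ω := by
  set P := (heavy K γ).erase (-h)
  have hL' : (1 : ℝ) ≤ L := by exact_mod_cast hL
  have hm0 : 0 ≤ m := (abs_nonneg _).trans h1
  have hγm : m ≤ 1 / γ := by
    rw [le_div_iff₀ hγ]; nlinarith
  have hmem : ∀ k ∈ P, k ∈ heavy K γ ∧ k + h ≠ 0 := fun k hk =>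
    ⟨mem_of_mem_erase hk, fun hkh => ne_of_mem_erase hk (eq_neg_of_add_eq_zero_left hkh)⟩
  have hbound : ∀ i : ℝ, |i| ≤ m → 800 * L * γ * |i| ≤ 1 := fun i hi =>
    le_trans (by gcongr) hm
  have hPh : ∀ k ∈ P, k + h ∈ latt γ := fun k hk =>
    add_mem_latt_of_mem_heavy hsupp hγ hN (hmem k hk).1 (hmem k hk).2
      (h1.trans hγm) (h2.trans hγm)
  have hw : ∀ k ∈ P, γ ^ 2 / 800 ≤ weight K γ k ∧ γ ^ 2 / 800 ≤ weight K γ (k + h) := by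
    intro k hk
    have hk' := (mem_heavy.1 (hmem k hk).1).2
    have hkh := le_kernel_add_of_mem_heavy hLip hγ (hmem k hk).1 (hbound _ h1) (hbound _ h2)
    constructor <;> rw [weight] <;> nlinarith [sq_nonneg γ]
  have hcard : (1 / 4 : ℝ) ≤ #P * γ ^ 2 := by
    have hpos : 0 < #(heavy K γ) := by
      by_contra h0
      rw [Nat.eq_zero_of_not_pos h0] at hheavy
      norm_num at hheavy
    have : (#(heavy K γ) : ℝ) - 1 ≤ #P := by
      have := pred_card_le_card_erase (s := heavy K γ) (a := -h)
      rw [← Nat.cast_one, ← Nat.cast_sub hpos]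
      exact_mod_cast this
    nlinarith
  have hpair := card_mul_le_dissipation hK0 (by positivity)
    (fun k hk => (mem_heavy.1 (hmem k hk).1).1) hPh hw ω
  have hc : 0 ≤ 1 - cos (phase γ ω h) := sub_nonneg.2 (cos_le_one _)
  nlinarith

end Pairing

lemma exists_le_one_sub_cos_nat_mul {s : ℝ} (hs0 : 0 ≤ s) (hsπ : s ≤ π) (n₀ : ℕ) :
    ∃ n ≤ n₀, min 1 (2 / π ^ 2 * (n₀ * s) ^ 2) ≤ 1 - cos (n * s) := by
  by_cases hbig : π / 2 ≤ n₀ * s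
  · have hs : 0 < s := by
      rcases hs0.eq_or_lt with h | h
      · rw [← h, mul_zero] at hbig; linarith [pi_pos]
      · exact h
    refine ⟨⌈π / (2 * s)⌉₊, Nat.ceil_le.2 ?_, (min_le_left _ _).trans ?_⟩
    · rw [div_le_iff₀ (by positivity)]; linarith
    have hlow : π / 2 ≤ ⌈π / (2 * s)⌉₊ * s := by
      calc π / 2 = π / (2 * s) * s := by field_simp
        _ ≤ _ := by gcongr; exact Nat.le_ceil _
    have hup : ⌈π / (2 * s)⌉₊ * s ≤ π + π / 2 := by
      calc ⌈π / (2 * s)⌉₊ * s ≤ (π / (2 * s) + 1) * s := by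
            gcongr; exact (Nat.ceil_lt_add_one (by positivity)).le
        _ = π / 2 + s := by field_simp
        _ ≤ π + π / 2 := by linarith
    linarith [cos_nonpos_of_pi_div_two_le_of_le hlow hup]
  · refine ⟨n₀, le_rfl, (min_le_right _ _).trans ?_⟩
    have h := cos_le_one_sub_mul_cos_sq (x := n₀ * s)
      (by rw [abs_of_nonneg (by positivity)]; linarith [pi_pos])
    linarith

lemma exists_axis_direction (ω : ℝ × ℝ) :
    ∃ d : ℤ × ℤ, |(d.1 : ℝ)| ≤ 1 ∧ |(d.2 : ℝ)| ≤ 1 ∧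
      |ω.1 * d.1 + ω.2 * d.2| = max |ω.1| |ω.2| ∧
      enorm2 ω ^ 2 ≤ 2 * (ω.1 * d.1 + ω.2 * d.2) ^ 2 := by
  rw [enorm2, Real.sq_sqrt (by positivity)]
  rcases le_total |ω.2| |ω.1| with h | h
  · refine ⟨(1, 0), by simp, by simp, by simp [h], ?_⟩
    have := sq_le_sq.2 h
    simp only [Int.cast_one, Int.cast_zero, mul_one, mul_zero, add_zero]
    linarith
  · refine ⟨(0, 1), by simp, by simp, by simp [h], ?_⟩
    have := sq_le_sq.2 h
    simp only [Int.cast_one, Int.cast_zero, mul_one, mul_zero, zero_add]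
    linarith

section LowerBound

variable {K : ℝ × ℝ → ℝ} {γ : ℝ} {L : ℝ≥0}

lemma abs_phase_le_pi (ω : ℝ × ℝ) {d : ℤ × ℤ}
    (ht : |ω.1 * d.1 + ω.2 * d.2| ≤ (NN γ : ℝ) + 1 / 2) : |phase γ ω d| ≤ π := by
  have hε0 : 0 < epsg γ := by rw [epsg]; positivity
  rw [phase, abs_mul, abs_of_pos (by positivity)]
  calc π * epsg γ * |ω.1 * d.1 + ω.2 * d.2| ≤ π * epsg γ * ((NN γ : ℝ) + 1 / 2) := by gcongr
    _ = π := by rw [mul_assoc, epsg_mul_NN_add_half, mul_one]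

lemma dissipation_ge_of_nat_mul (hK0 : ∀ x, 0 ≤ K x)
    (hsupp : ∀ x : ℝ × ℝ, 3 ≤ ‖x‖ → K x = 0) (hLip : LipschitzWith L K) (hL : 1 ≤ L)
    (hγ : 0 < γ) (hγ2 : γ ≤ 1 / 2) (hN : 4 / γ ≤ NN γ)
    (hheavy : 1 / 2 ≤ (#(heavy K γ) : ℝ) * γ ^ 2) (ω : ℝ × ℝ) {d : ℤ × ℤ}
    (hd1 : |(d.1 : ℝ)| ≤ 1) (hd2 : |(d.2 : ℝ)| ≤ 1) {n : ℕ} (hn : 800 * L * γ * n ≤ 1) :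
    (1 - cos (n * |phase γ ω d|)) / 12800 ≤ dissipation K γ ω := by
  have hnd : ∀ i : ℤ, |(i : ℝ)| ≤ 1 → |((n • i : ℤ) : ℝ)| ≤ n := fun i hi => by
    rw [nsmul_eq_mul, Int.cast_mul, Int.cast_natCast, abs_mul, Nat.abs_cast]
    exact mul_le_of_le_one_right n.cast_nonneg hi
  have := dissipation_ge_of_shift hK0 hsupp hLip hL hγ hγ2 hN hheavy (h := n • d)
    (hnd _ hd1) (hnd _ hd2) hn ω
  rwa [phase_nsmul, ← cos_abs, abs_mul, Nat.abs_cast] at this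

lemma le_floor_mul_abs_phase (hL : 1 ≤ L) (hγ : 0 < γ) (hγL : 1600 * L * γ ≤ 1)
    (ω : ℝ × ℝ) (d : ℤ × ℤ) :
    π * (γ * |ω.1 * d.1 + ω.2 * d.2|) / (3200 * L) ≤
      ⌊1 / (800 * L * γ)⌋₊ * |phase γ ω d| := by
  have hL' : (1 : ℝ) ≤ L := by exact_mod_cast hL
  have hn₀ : 1 / (1600 * L * γ) ≤ ⌊1 / (800 * L * γ)⌋₊ := by
    have := Nat.div_two_lt_floor (a := 1 / (800 * L * γ))
      (by rw [le_div_iff₀ (by positivity)]; linarith)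
    rw [show 1 / (1600 * L * γ) = 1 / (800 * L * γ) / 2 by field_simp; ring]
    exact this.le
  have hε0 : 0 < epsg γ := by rw [epsg]; positivity
  rw [phase, abs_mul (π * epsg γ), abs_of_pos (mul_pos pi_pos hε0)]
  calc π * (γ * |ω.1 * d.1 + ω.2 * d.2|) / (3200 * L)
      = 1 / (1600 * L * γ) * (π * (γ ^ 2 / 2) * |ω.1 * d.1 + ω.2 * d.2|) := by
        field_simp; ring
    _ ≤ _ := by gcongr; exact sq_div_two_le_epsg hγ (by nlinarith)

lemma dissipation_ge_of_direction (hK0 : ∀ x, 0 ≤ K x)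
    (hsupp : ∀ x : ℝ × ℝ, 3 ≤ ‖x‖ → K x = 0) (hLip : LipschitzWith L K) (hL : 1 ≤ L)
    (hγ : 0 < γ) (hγL : 1600 * L * γ ≤ 1) (hN : 4 / γ ≤ NN γ)
    (hheavy : 1 / 2 ≤ (#(heavy K γ) : ℝ) * γ ^ 2) (ω : ℝ × ℝ) {d : ℤ × ℤ}
    (hd1 : |(d.1 : ℝ)| ≤ 1) (hd2 : |(d.2 : ℝ)| ≤ 1)
    (ht : |ω.1 * d.1 + ω.2 * d.2| ≤ (NN γ : ℝ) + 1 / 2) :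
    min 1 ((γ * (ω.1 * d.1 + ω.2 * d.2)) ^ 2) / (12800 * (3200 * L) ^ 2) ≤
      dissipation K γ ω := by
  set t := ω.1 * d.1 + ω.2 * d.2
  have hL' : (1 : ℝ) ≤ L := by exact_mod_cast hL
  have hγ2 : γ ≤ 1 / 2 := by nlinarith
  set s := |phase γ ω d|
  set n₀ := ⌊1 / (800 * L * γ)⌋₊
  obtain ⟨n, hn, hcos⟩ := exists_le_one_sub_cos_nat_mul (abs_nonneg _) (abs_phase_le_pi ω ht) n₀
  have hnγ : 800 * L * γ * n ≤ 1 := by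
    have hn₀ : (n₀ : ℝ) ≤ 1 / (800 * L * γ) := Nat.floor_le (by positivity)
    rw [le_div_iff₀ (by positivity)] at hn₀
    calc 800 * L * γ * n ≤ 800 * L * γ * n₀ := by gcongr
      _ ≤ 1 := by linarith
  have hlow := le_floor_mul_abs_phase hL hγ hγL ω d
  have hquad : (γ * t) ^ 2 / (3200 * L) ^ 2 ≤ 2 / π ^ 2 * (n₀ * s) ^ 2 := by
    have e : (π * (γ * |t|) / (3200 * L)) ^ 2 = π ^ 2 * ((γ * t) ^ 2 / (3200 * L) ^ 2) := by
      rw [div_pow, mul_pow, mul_pow, mul_pow, sq_abs]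
      ring
    calc (γ * t) ^ 2 / (3200 * L) ^ 2 ≤ 2 / π ^ 2 * (π * (γ * |t|) / (3200 * L)) ^ 2 := by
          rw [e, ← mul_assoc, div_mul_cancel₀ _ (by positivity)]
          linarith [div_nonneg (sq_nonneg (γ * t)) (sq_nonneg (3200 * (L : ℝ)))]
      _ ≤ 2 / π ^ 2 * (n₀ * s) ^ 2 := by gcongr
  calc min 1 ((γ * t) ^ 2) / (12800 * (3200 * L) ^ 2)
      ≤ min 1 ((γ * t) ^ 2 / (3200 * L) ^ 2) / 12800 := by
        rw [mul_comm (12800 : ℝ), ← div_div, ← min_div_div_right (by positivity)]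
        gcongr
        exact div_le_one_of_le₀ (by nlinarith) (by positivity)
    _ ≤ (1 - cos (n * s)) / 12800 := by gcongr; exact (min_le_min le_rfl hquad).trans hcos
    _ ≤ dissipation K γ ω :=
        dissipation_ge_of_nat_mul hK0 hsupp hLip hL hγ hγ2 hN hheavy ω hd1 hd2 hnγ

lemma min_sq_le_dissipation (hK : ∀ x, K x ∈ Set.Icc (0 : ℝ) 1)
    (hsupp : ∀ x : ℝ × ℝ, 3 ≤ ‖x‖ → K x = 0) (hLip : LipschitzWith L K) (hL : 1 ≤ L)
    (hγ : 0 < γ) (hγL : 1600 * L * γ ≤ 1) (hS : 3 / 4 ≤ totalWeight K γ) {ω : ℝ × ℝ}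
    (hω1 : |ω.1| ≤ (NN γ : ℝ) + 1 / 2) (hω2 : |ω.2| ≤ (NN γ : ℝ) + 1 / 2) :
    min ((γ * enorm2 ω) ^ 2) 1 / (2 * (12800 * (3200 * L) ^ 2)) ≤ dissipation K γ ω := by
  have hL' : (1 : ℝ) ≤ L := by exact_mod_cast hL
  have hγ5 : γ ≤ 1 / 5 := by nlinarith
  have hheavy := card_heavy_mul_sq_ge (fun x => (hK x).2) hsupp hγ (by linarith) hS
  obtain ⟨d, hd1, hd2, hdω, hωd⟩ := exists_axis_direction ω
  have hΦ := dissipation_ge_of_direction (fun x => (hK x).1) hsupp hLip hL hγ hγL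
    (four_div_le_NN hγ hγ5) hheavy ω hd1 hd2 (hdω.trans_le (max_le hω1 hω2))
  have hmin : min ((γ * enorm2 ω) ^ 2) 1 ≤ 2 * min 1 ((γ * (ω.1 * d.1 + ω.2 * d.2)) ^ 2) := by
    rw [min_comm, mul_min_of_nonneg _ _ zero_le_two]
    exact min_le_min (by norm_num) (by rw [mul_pow, mul_pow]; nlinarith [sq_nonneg γ])
  calc min ((γ * enorm2 ω) ^ 2) 1 / (2 * (12800 * (3200 * L) ^ 2))
      ≤ 2 * min 1 ((γ * (ω.1 * d.1 + ω.2 * d.2)) ^ 2) / (2 * (12800 * (3200 * L) ^ 2)) := by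
        gcongr
    _ = min 1 ((γ * (ω.1 * d.1 + ω.2 * d.2)) ^ 2) / (12800 * (3200 * L) ^ 2) := by
        field_simp
    _ ≤ dissipation K γ ω := hΦ

end LowerBound

/-- There exist `C₁ > 0` and `γ₀ ∈ (0, 1/3)` such that for all `0 < γ < γ₀` and all
`ω ∈ [-N-1/2, N+1/2]²`: `1 - K̂_γ(ω) ≥ min |γω|² 1 / C₁`. -/
theorem stmt10 (K : ℝ × ℝ → ℝ) (hK : IsKernel K) :
    ∃ C₁ : ℝ, 0 < C₁ ∧ ∃ γ₀ : ℝ, 0 < γ₀ ∧ γ₀ < 1 / 3 ∧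
      ∀ γ : ℝ, 0 < γ → γ < γ₀ → ∀ ω : ℝ × ℝ,
        |ω.1| ≤ (NN γ : ℝ) + 1 / 2 → |ω.2| ≤ (NN γ : ℝ) + 1 / 2 →
        min ((γ * enorm2 ω) ^ 2) 1 / C₁ ≤ 1 - Khat K γ ω := by
  obtain ⟨hC2, hK01, -, hsupp, hint, -⟩ := hK
  have hsupp' : ∀ x : ℝ × ℝ, 3 ≤ ‖x‖ → K x = 0 := fun x hx =>
    hsupp x (hx.trans (norm_le_enorm2 x))
  obtain ⟨L₀, hLip₀⟩ := hC2.lipschitzWith_of_hasCompactSupport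
    (hasCompactSupport_of_eq_zero_of_le_norm 3 hsupp') two_ne_zero
  set L := max L₀ 1
  have hLip : LipschitzWith L K := hLip₀.weaken (le_max_left _ _)
  have hL : 1 ≤ L := le_max_right L₀ 1
  have hL' : (1 : ℝ) ≤ L := by exact_mod_cast hL
  refine ⟨49 * (2 * (12800 * (3200 * L) ^ 2)), by positivity, 1 / (1600 * L), by positivity,
    by rw [div_lt_iff₀ (by positivity)]; linarith, fun γ hγ hγ₀ ω hω1 hω2 => ?_⟩
  have hγL : 1600 * L * γ ≤ 1 := by
    rw [lt_div_iff₀ (by positivity)] at hγ₀; linarith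
  have hS := three_quarters_le_totalWeight hK01 hsupp' hLip hL hint hγ hγL
  have hS49 := totalWeight_le (fun x => (hK01 x).2) hsupp' hγ (by nlinarith)
  rw [one_sub_Khat_eq (by linarith), mul_comm (49 : ℝ), ← div_div]
  calc min ((γ * enorm2 ω) ^ 2) 1 / (2 * (12800 * (3200 * L) ^ 2)) / 49
      ≤ dissipation K γ ω / 49 := by
        gcongr
        exact min_sq_le_dissipation hK01 hsupp' hLip hL hγ hγL hS hω1 hω2
    _ ≤ dissipation K γ ω / totalWeight K γ :=
        div_le_div_of_nonneg_left (dissipation_nonneg (fun x => (hK01 x).1) ω) (by linarith) hS49
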